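/- With Q(σ,k) = 1/(−2πiσ + 4π²(i+μ)|k|² + 1), μ > 0, the 'hyperplane' integral over μ_1 + μ_2 = μ of |Q(μ_1)|²|Q(μ_2)|² satisfies ∫_{μ_1+μ_2=μ} |Q(μ_1)|² |Q(μ_2)|² ≲ |μ|_*^{-3}, where the integral means ∫_R dσ_1 Σ_{k_1 ∈ Z^3} with μ_2 = μ − μ_1, and |μ|_* = 1+|σ|^{1/2}+|k| for μ = (σ,k) ∈ R × Z^3. -/

import Mathlib

/-!
The denominator of `Q(σ, k)` has real part `1 + 4π²μ|k|²` and imaginary part `4π²|k|² - 2πσ`, so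
it dominates `1 + |σ| + |k|² ≳ |(σ, k)|_*²`, i.e. `|Q(ν)| ≲ |ν|_*⁻²`. It remains to bound
`∫ |w|_*⁻⁴ |v - w|_*⁻⁴` by `|v|_*⁻³`. As `|w|_* + |v - w|_* ≥ |v|_*`, the larger of the two
weights is at least `M = |v|_*/2`, and the substitution `w ↦ v - w` preserves the measure, so the
integral is at most `2 ∫ |w|_*⁻⁴ max(|w|_*, M)⁻⁴`. The ball `{|w|_* < r}` lies in an interval of
length `2r²` times a cube of `≲ r³` lattice points, so decomposing into dyadic shells bounds this
by `∑ₙ 2ⁿ max(2ⁿ, M)⁻⁴ ≲ M⁻³`: the ball has homogeneous dimension `5 < 4 + 4`.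
-/

open MeasureTheory
open scoped ENNReal

noncomputable section

/-- The resolvent multiplier `Q(σ,k) = 1/(−2πiσ + 4π²(i+μ)|k|² + 1)` on `E = ℝ × ℤ³`. -/
def Qker (μ : ℝ) (v : ℝ × (Fin 3 → ℤ)) : ℂ :=
  1 / (-(2 * (Real.pi : ℂ) * Complex.I * (v.1 : ℂ)) +
    4 * (Real.pi : ℂ) ^ 2 * (Complex.I + (μ : ℂ)) * (∑ i, (v.2 i : ℂ) ^ 2) + 1)

/-- The parabolic weight `|μ|_* = 1 + |σ|^{1/2} + |k|` on `E = ℝ × ℤ³`. -/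
def pweight (v : ℝ × (Fin 3 → ℤ)) : ℝ :=
  1 + Real.sqrt |v.1| + Real.sqrt (∑ i, ((v.2 i : ℝ)) ^ 2)

/-- The measure on `E = ℝ × ℤ³`: Lebesgue measure times counting measure. -/
def Emeasure : Measure (ℝ × (Fin 3 → ℤ)) :=
  (volume : Measure ℝ).prod Measure.count

open Finset

def Qden (μ : ℝ) (v : ℝ × (Fin 3 → ℤ)) : ℂ :=
  -(2 * (Real.pi : ℂ) * Complex.I * (v.1 : ℂ)) +
    4 * (Real.pi : ℂ) ^ 2 * (Complex.I + (μ : ℂ)) * (∑ i, (v.2 i : ℂ) ^ 2) + 1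

theorem one_le_pweight (v : ℝ × (Fin 3 → ℤ)) : 1 ≤ pweight v := by
  unfold pweight
  linarith [Real.sqrt_nonneg |v.1|, Real.sqrt_nonneg (∑ i, ((v.2 i : ℝ)) ^ 2)]

theorem pweight_sq_le (v : ℝ × (Fin 3 → ℤ)) :
    pweight v ^ 2 ≤ 3 * (1 + |v.1| + ∑ i, ((v.2 i : ℝ)) ^ 2) := by
  have hσ := Real.sq_sqrt (abs_nonneg v.1)
  have hk := Real.sq_sqrt (by positivity : (0 : ℝ) ≤ ∑ i, ((v.2 i : ℝ)) ^ 2)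
  unfold pweight
  nlinarith [sq_nonneg (√|v.1| - 1), sq_nonneg (√(∑ i, ((v.2 i : ℝ)) ^ 2) - 1),
    sq_nonneg (√|v.1| - √(∑ i, ((v.2 i : ℝ)) ^ 2))]

section Resolvent

variable {μ : ℝ} (v : ℝ × (Fin 3 → ℤ))

theorem Qker_eq_inv : Qker μ v = (Qden μ v)⁻¹ := one_div _

theorem Qden_re : (Qden μ v).re = 1 + 4 * Real.pi ^ 2 * μ * ∑ i, ((v.2 i : ℝ)) ^ 2 := by
  simp [Qden, ← Complex.ofReal_intCast, ← Complex.ofReal_pow, ← Complex.ofReal_sum]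
  ring

theorem Qden_im :
    (Qden μ v).im = 4 * Real.pi ^ 2 * ∑ i, ((v.2 i : ℝ)) ^ 2 - 2 * Real.pi * v.1 := by
  simp [Qden, ← Complex.ofReal_intCast, ← Complex.ofReal_pow, ← Complex.ofReal_sum]
  ring

theorem one_le_norm_Qden (hμ : 0 ≤ μ) : 1 ≤ ‖Qden μ v‖ :=
  calc 1 ≤ (Qden μ v).re := by rw [Qden_re]; simp only [le_add_iff_nonneg_right]; positivity
    _ ≤ ‖Qden μ v‖ := Complex.re_le_norm _

theorem one_add_abs_add_sum_sq_le_norm_Qden (hμ : 0 < μ) :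
    1 + |v.1| + ∑ i, ((v.2 i : ℝ)) ^ 2 ≤ 2 * (1 + μ⁻¹) * ‖Qden μ v‖ := by
  set a := ∑ i, ((v.2 i : ℝ)) ^ 2
  set x := ‖Qden μ v‖
  have ha : 0 ≤ a := by positivity
  have hπ : 1 ≤ Real.pi := by linarith [Real.pi_gt_three]
  have hre : 1 + 4 * Real.pi ^ 2 * μ * a ≤ x := Qden_re v ▸ Complex.re_le_norm _
  have him : |4 * Real.pi ^ 2 * a - 2 * Real.pi * v.1| ≤ x :=
    Qden_im v ▸ Complex.abs_im_le_norm _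
  have hka : 4 * Real.pi ^ 2 * (μ * a) ≤ x := by linarith
  have hk : μ * a ≤ x :=
    (le_mul_of_one_le_left (by positivity) (by nlinarith)).trans hka
  have hσ : |v.1| ≤ x + 4 * Real.pi ^ 2 * a := by
    have := abs_sub_abs_le_abs_sub (2 * Real.pi * v.1) (4 * Real.pi ^ 2 * a)
    rw [abs_sub_comm, abs_mul, abs_of_pos (by positivity : 0 < 2 * Real.pi),
      abs_of_nonneg (by positivity : 0 ≤ 4 * Real.pi ^ 2 * a)] at this
    nlinarith [abs_nonneg v.1]
  have hμσ : μ * |v.1| ≤ μ * x + x := by nlinarith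
  have key : μ * (1 + |v.1| + a) ≤ μ * (2 * (1 + μ⁻¹) * x) := by
    rw [show μ * (2 * (1 + μ⁻¹) * x) = 2 * (μ + 1) * x by field_simp]
    nlinarith [mul_le_mul_of_nonneg_left (one_le_norm_Qden v hμ.le) hμ.le]
  exact le_of_mul_le_mul_left key hμ

theorem norm_Qker_le (hμ : 0 < μ) : ‖Qker μ v‖ ≤ 6 * (1 + μ⁻¹) / pweight v ^ 2 := by
  have hp : 0 < pweight v ^ 2 := by have := one_le_pweight v; positivity
  have hz : 0 < ‖Qden μ v‖ := zero_lt_one.trans_le (one_le_norm_Qden v hμ.le)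
  rw [Qker_eq_inv, norm_inv, le_div_iff₀ hp, inv_mul_le_iff₀ hz]
  calc pweight v ^ 2 ≤ 3 * (1 + |v.1| + ∑ i, ((v.2 i : ℝ)) ^ 2) := pweight_sq_le v
    _ ≤ 3 * (2 * (1 + μ⁻¹) * ‖Qden μ v‖) := by
        gcongr; exact one_add_abs_add_sum_sq_le_norm_Qden v hμ
    _ = _ := by ring

theorem enorm_Qker_sq_le (hμ : 0 < μ) :
    (‖Qker μ v‖₊ : ℝ≥0∞) ^ 2 ≤ ENNReal.ofReal ((6 * (1 + μ⁻¹)) ^ 2 * (pweight v ^ 4)⁻¹) := by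
  rw [← enorm_eq_nnnorm, ← ofReal_norm, ← ENNReal.ofReal_pow (norm_nonneg _)]
  refine ENNReal.ofReal_le_ofReal ?_
  calc ‖Qker μ v‖ ^ 2 ≤ (6 * (1 + μ⁻¹) / pweight v ^ 2) ^ 2 := by
        gcongr; exact norm_Qker_le v hμ
    _ = _ := by ring

end Resolvent

theorem pweight_eq (v : ℝ × (Fin 3 → ℤ)) : pweight v =
    1 + √|v.1| + ‖(WithLp.toLp 2 (fun i ↦ (v.2 i : ℝ)) : EuclideanSpace ℝ (Fin 3))‖ := by
  simp [pweight, EuclideanSpace.norm_eq]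

theorem sqrt_abs_add_le (a b : ℝ) : √|a + b| ≤ √|a| + √|b| := by
  refine Real.sqrt_le_iff.mpr ⟨by positivity, ?_⟩
  nlinarith [abs_add_le a b, Real.sq_sqrt (abs_nonneg a), Real.sq_sqrt (abs_nonneg b),
    Real.sqrt_nonneg |a|, Real.sqrt_nonneg |b|]

theorem pweight_add_le (v w : ℝ × (Fin 3 → ℤ)) : pweight (v + w) ≤ pweight v + pweight w := by
  simp only [pweight_eq, Prod.fst_add, Prod.snd_add, Pi.add_apply, Int.cast_add]
  have hk : ‖(WithLp.toLp 2 (fun i ↦ (v.2 i : ℝ) + w.2 i) : EuclideanSpace ℝ (Fin 3))‖ ≤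
      ‖(WithLp.toLp 2 (fun i ↦ (v.2 i : ℝ)) : EuclideanSpace ℝ (Fin 3))‖ +
        ‖(WithLp.toLp 2 (fun i ↦ (w.2 i : ℝ)) : EuclideanSpace ℝ (Fin 3))‖ :=
    norm_add_le (WithLp.toLp 2 (fun i ↦ (v.2 i : ℝ)) : EuclideanSpace ℝ (Fin 3))
      (WithLp.toLp 2 fun i ↦ (w.2 i : ℝ))
  linarith [sqrt_abs_add_le v.1 w.1]

theorem measurable_pweight : Measurable pweight := by
  unfold pweight; fun_prop

theorem setOf_pweight_lt_subset (m : ℕ) :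
    {w | pweight w < 2 ^ m} ⊆ Set.Ioo (-4 ^ m) (4 ^ m) ×ˢ
      ↑(Fintype.piFinset fun _ : Fin 3 ↦ Icc (-2 ^ m : ℤ) (2 ^ m)) := by
  intro w (hw : 1 + √|w.1| + √(∑ i, ((w.2 i : ℝ)) ^ 2) < 2 ^ m)
  have h2m : (0 : ℝ) < 2 ^ m := by positivity
  have hσ : √|w.1| < 2 ^ m := by linarith [Real.sqrt_nonneg (∑ i, ((w.2 i : ℝ)) ^ 2)]
  have hk : √(∑ i, ((w.2 i : ℝ)) ^ 2) < 2 ^ m := by linarith [Real.sqrt_nonneg |w.1|]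
  refine ⟨?_, ?_⟩
  · rw [Real.sqrt_lt' h2m, ← pow_mul, pow_mul', show (2 : ℝ) ^ 2 = 4 by norm_num] at hσ
    exact abs_lt.mp hσ
  · simp only [Fintype.coe_piFinset, Set.mem_pi, Set.mem_univ, Finset.mem_coe,
      Finset.mem_Icc, forall_const]
    intro i
    have : |(w.2 i : ℝ)| < 2 ^ m :=
      (Real.abs_le_sqrt (single_le_sum (f := fun j ↦ ((w.2 j : ℝ)) ^ 2)
        (fun j _ ↦ sq_nonneg _) (mem_univ i))).trans_lt hk
    exact_mod_cast (abs_le.mp this.le)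

theorem card_Icc_neg_two_pow (m : ℕ) : #(Icc (-2 ^ m : ℤ) (2 ^ m)) = 2 * 2 ^ m + 1 := by
  rw [Int.card_Icc, show (2 : ℤ) ^ m = ((2 ^ m : ℕ) : ℤ) by push_cast; rfl]
  omega

theorem Emeasure_setOf_pweight_lt_le (m : ℕ) :
    Emeasure {w | pweight w < 2 ^ m} ≤ 2 ^ (5 * m + 7) := by
  have hvol : volume (Set.Ioo (-4 ^ m : ℝ) (4 ^ m)) = 2 ^ (2 * m + 1) := by
    rw [Real.volume_Ioo, sub_neg_eq_add, ← two_mul, ← ENNReal.ofReal_ofNat 2,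
      ← ENNReal.ofReal_pow zero_le_two, pow_succ, pow_mul]
    norm_num [mul_comm]
  have hcount : Measure.count (↑(Fintype.piFinset fun _ : Fin 3 ↦ Icc (-2 ^ m : ℤ) (2 ^ m)) :
      Set (Fin 3 → ℤ)) ≤ 2 ^ (3 * m + 6) := by
    rw [Measure.count_apply_finset, Fintype.card_piFinset, prod_const, card_Icc_neg_two_pow,
      card_univ, Fintype.card_fin]
    have : (2 * 2 ^ m + 1) ^ 3 ≤ 2 ^ (3 * m + 6) :=
      calc (2 * 2 ^ m + 1) ^ 3 ≤ (2 ^ 2 * 2 ^ m) ^ 3 := by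
            gcongr; have := Nat.one_le_two_pow (n := m); omega
        _ = 2 ^ (3 * m + 6) := by ring
    exact_mod_cast this
  calc Emeasure {w | pweight w < 2 ^ m}
      ≤ volume (Set.Ioo (-4 ^ m : ℝ) (4 ^ m)) * Measure.count
          (↑(Fintype.piFinset fun _ : Fin 3 ↦ Icc (-2 ^ m : ℤ) (2 ^ m)) : Set (Fin 3 → ℤ)) := by
        rw [← Measure.prod_prod]; exact measure_mono (setOf_pweight_lt_subset m)
    _ ≤ 2 ^ (2 * m + 1) * 2 ^ (3 * m + 6) := by rw [hvol]; gcongr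
    _ = 2 ^ (5 * m + 7) := by ring

theorem lintegral_comp_le_tsum_two_pow {X : Type*} [MeasurableSpace X] (ν : Measure X)
    {ρ : X → ℝ} (hρ : Measurable ρ) (hρ1 : ∀ x, 1 ≤ ρ x) {f : ℝ → ℝ≥0∞}
    (hf : AntitoneOn f (Set.Ici 1)) :
    ∫⁻ x, f (ρ x) ∂ν ≤ ∑' n : ℕ, f (2 ^ n) * ν {x | ρ x < 2 ^ (n + 1)} := by
  have hball (n : ℕ) : MeasurableSet {x | ρ x < 2 ^ (n + 1)} :=
    measurableSet_lt hρ measurable_const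
  have hpt (x : X) :
      f (ρ x) ≤ ∑' n : ℕ, {x | ρ x < 2 ^ (n + 1)}.indicator (fun _ ↦ f (2 ^ n)) x := by
    obtain ⟨n, hn, hn'⟩ := exists_nat_pow_near (hρ1 x) one_lt_two
    calc f (ρ x) ≤ f (2 ^ n) := hf (Set.mem_Ici.mpr (one_le_pow₀ one_le_two)) (hρ1 x) hn
      _ = {x | ρ x < 2 ^ (n + 1)}.indicator (fun _ ↦ f (2 ^ n)) x :=
        (Set.indicator_of_mem (show x ∈ {x | ρ x < 2 ^ (n + 1)} from hn')
          fun _ ↦ f (2 ^ n)).symm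
      _ ≤ _ := ENNReal.le_tsum n
  calc ∫⁻ x, f (ρ x) ∂ν
      ≤ ∫⁻ x, ∑' n : ℕ, {x | ρ x < 2 ^ (n + 1)}.indicator (fun _ ↦ f (2 ^ n)) x ∂ν :=
        lintegral_mono hpt
    _ = ∑' n : ℕ, f (2 ^ n) * ν {x | ρ x < 2 ^ (n + 1)} := by
        rw [lintegral_tsum fun n ↦ (measurable_const.indicator (hball n)).aemeasurable]
        simp_rw [lintegral_indicator_const (hball _)]

theorem inv_eight_pow (n : ℕ) : (8 : ℝ)⁻¹ ^ n = ((2 ^ n) ^ 3)⁻¹ := by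
  rw [inv_pow, ← pow_mul, mul_comm, pow_mul]; norm_num

theorem two_pow_div_max_pow_four_le (M : ℝ) (n : ℕ) :
    (2 : ℝ) ^ n / max (2 ^ n) M ^ 4 ≤ 8⁻¹ ^ n :=
  calc (2 : ℝ) ^ n / max (2 ^ n) M ^ 4 ≤ 2 ^ n / (2 ^ n) ^ 4 := by gcongr; exact le_max_left _ _
    _ = 8⁻¹ ^ n := by rw [inv_eight_pow]; field_simp

theorem summable_two_pow_div_max_pow_four (M : ℝ) :
    Summable fun n : ℕ ↦ (2 : ℝ) ^ n / max (2 ^ n) M ^ 4 :=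
  (summable_geometric_of_lt_one (by norm_num) (by norm_num)).of_nonneg_of_le
    (fun n ↦ div_nonneg (by positivity) (by positivity)) (two_pow_div_max_pow_four_le M)

/-- Split at the dyadic scale `2 ^ k ≈ M`: below it the terms grow geometrically up to `M / M ^ 4`,
above it they decay geometrically from `M ^ (-3)`. -/
theorem tsum_two_pow_div_max_pow_four_le {M : ℝ} (hM : 0 < M) :
    ∑' n : ℕ, (2 : ℝ) ^ n / max (2 ^ n) M ^ 4 ≤ 4 / M ^ 3 := by
  obtain ⟨k, hMk, hkM⟩ : ∃ k : ℕ, M ≤ 2 ^ k ∧ 2 ^ k ≤ 2 * M + 1 := by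
    rcases lt_or_ge M 1 with h | h
    · exact ⟨0, by simpa using h.le, by simp; linarith⟩
    · obtain ⟨n, h1, h2⟩ := exists_nat_pow_near h one_lt_two
      exact ⟨n + 1, h2.le, by rw [pow_succ]; linarith⟩
  have head : ∑ n ∈ range k, (2 : ℝ) ^ n / max (2 ^ n) M ^ 4 ≤ 2 / M ^ 3 :=
    calc ∑ n ∈ range k, (2 : ℝ) ^ n / max (2 ^ n) M ^ 4 ≤ ∑ n ∈ range k, (2 : ℝ) ^ n / M ^ 4 :=
          sum_le_sum fun n _ ↦ by gcongr; exact le_max_right _ _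
      _ = (2 ^ k - 1) / M ^ 4 := by rw [← sum_div, geom_sum_eq (by norm_num)]; norm_num
      _ ≤ 2 * M / M ^ 4 := by gcongr; linarith
      _ = 2 / M ^ 3 := by field_simp
  have tail : ∑' n : ℕ, (2 : ℝ) ^ (n + k) / max (2 ^ (n + k)) M ^ 4 ≤ 2 / M ^ 3 :=
    calc ∑' n : ℕ, (2 : ℝ) ^ (n + k) / max (2 ^ (n + k)) M ^ 4 ≤ ∑' n : ℕ, 8⁻¹ ^ k * 8⁻¹ ^ n :=
          Summable.tsum_le_tsum (fun n ↦ (two_pow_div_max_pow_four_le M _).trans_eq (by ring))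
            ((summable_nat_add_iff k).mpr (summable_two_pow_div_max_pow_four M))
            ((summable_geometric_of_lt_one (by norm_num) (by norm_num)).mul_left _)
      _ = (8 / 7) / (2 ^ k) ^ 3 := by
          rw [tsum_mul_left, tsum_geometric_of_lt_one (by norm_num) (by norm_num), inv_eight_pow]
          field_simp; norm_num
      _ ≤ 2 / M ^ 3 := by gcongr; norm_num
  rw [← (summable_two_pow_div_max_pow_four M).sum_add_tsum_nat_add k]
  calc _ ≤ 2 / M ^ 3 + 2 / M ^ 3 := add_le_add head tail
    _ = 4 / M ^ 3 := by ring

/-- Whichever of `x, y` is larger is at least `M`, so it may be replaced by `max _ M`. -/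
theorem inv_pow_mul_inv_pow_le_add {x y M : ℝ} (hx : 0 < x) (hy : 0 < y) (hxy : 2 * M ≤ x + y)
    (n : ℕ) :
    (x ^ n)⁻¹ * (y ^ n)⁻¹ ≤ (x ^ n)⁻¹ * (max x M ^ n)⁻¹ + (y ^ n)⁻¹ * (max y M ^ n)⁻¹ := by
  wlog h : x ≤ y generalizing x y
  · rw [mul_comm, add_comm]
    exact this hy hx (by linarith) (le_of_not_ge h)
  have hmax : 0 < max x M := lt_max_of_lt_left hx
  calc (x ^ n)⁻¹ * (y ^ n)⁻¹ ≤ (x ^ n)⁻¹ * (max x M ^ n)⁻¹ := by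
        gcongr; exact max_le h (by linarith)
    _ ≤ _ := le_add_of_nonneg_right (by positivity)

theorem measurePreserving_sub_left_Emeasure (v : ℝ × (Fin 3 → ℤ)) :
    MeasurePreserving (v - ·) Emeasure Emeasure :=
  (Measure.measurePreserving_sub_left volume v.1).prod
    (Measure.measurePreserving_sub_left Measure.count v.2)

theorem lintegral_inv_pweight_pow_mul_inv_max_pow_le {M : ℝ} (hM : 0 < M) :
    ∫⁻ w, ENNReal.ofReal ((pweight w ^ 4)⁻¹ * (max (pweight w) M ^ 4)⁻¹) ∂Emeasure ≤
      ENNReal.ofReal (2 ^ 14 / M ^ 3) := by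
  have hf :
      AntitoneOn (fun x : ℝ ↦ ENNReal.ofReal ((x ^ 4)⁻¹ * (max x M ^ 4)⁻¹)) (Set.Ici 1) := by
    intro a (ha : 1 ≤ a) b _ hab
    have : 0 < a := by linarith
    have : 0 < max a M := lt_max_of_lt_left this
    dsimp only
    gcongr
  have hterm (n : ℕ) : ENNReal.ofReal ((((2 : ℝ) ^ n) ^ 4)⁻¹ * (max (2 ^ n) M ^ 4)⁻¹) *
      Emeasure {w | pweight w < 2 ^ (n + 1)} ≤
        ENNReal.ofReal (2 ^ 12 * ((2 : ℝ) ^ n / max (2 ^ n) M ^ 4)) := by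
    have : 0 < max ((2 : ℝ) ^ n) M := lt_max_of_lt_right hM
    calc _ ≤ ENNReal.ofReal ((((2 : ℝ) ^ n) ^ 4)⁻¹ * (max (2 ^ n) M ^ 4)⁻¹) *
          2 ^ (5 * (n + 1) + 7) := by
          gcongr; exact Emeasure_setOf_pweight_lt_le (n + 1)
      _ = ENNReal.ofReal ((((2 : ℝ) ^ n) ^ 4)⁻¹ * (max (2 ^ n) M ^ 4)⁻¹ *
          2 ^ (5 * (n + 1) + 7)) := by
          conv_rhs => rw [ENNReal.ofReal_mul (by positivity), ENNReal.ofReal_pow zero_le_two,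
            ENNReal.ofReal_ofNat]
      _ = _ := by congr 1; field_simp; ring
  calc _ ≤ ∑' n : ℕ, ENNReal.ofReal ((((2 : ℝ) ^ n) ^ 4)⁻¹ * (max (2 ^ n) M ^ 4)⁻¹) *
        Emeasure {w | pweight w < 2 ^ (n + 1)} :=
        lintegral_comp_le_tsum_two_pow Emeasure measurable_pweight one_le_pweight hf
    _ ≤ ∑' n : ℕ, ENNReal.ofReal (2 ^ 12 * ((2 : ℝ) ^ n / max (2 ^ n) M ^ 4)) :=
        ENNReal.tsum_le_tsum hterm
    _ = ENNReal.ofReal (2 ^ 12 * ∑' n : ℕ, (2 : ℝ) ^ n / max (2 ^ n) M ^ 4) := by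
        rw [← tsum_mul_left, ENNReal.ofReal_tsum_of_nonneg (fun n ↦ by positivity)
          ((summable_two_pow_div_max_pow_four M).mul_left _)]
    _ ≤ ENNReal.ofReal (2 ^ 14 / M ^ 3) := by
        gcongr
        calc (2 : ℝ) ^ 12 * ∑' n : ℕ, (2 : ℝ) ^ n / max (2 ^ n) M ^ 4
            ≤ 2 ^ 12 * (4 / M ^ 3) := by gcongr; exact tsum_two_pow_div_max_pow_four_le hM
          _ = 2 ^ 14 / M ^ 3 := by ring

theorem lintegral_inv_pweight_pow_mul_le (v : ℝ × (Fin 3 → ℤ)) :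
    ∫⁻ w, ENNReal.ofReal ((pweight w ^ 4)⁻¹ * (pweight (v - w) ^ 4)⁻¹) ∂Emeasure ≤
      ENNReal.ofReal (2 ^ 18 / pweight v ^ 3) := by
  set M := pweight v / 2 with hMv
  have hM : 0 < M := by have := one_le_pweight v; positivity
  set g : ℝ × (Fin 3 → ℤ) → ℝ≥0∞ :=
    fun w ↦ ENNReal.ofReal ((pweight w ^ 4)⁻¹ * (max (pweight w) M ^ 4)⁻¹)
  have hg : Measurable g := by have := measurable_pweight; fun_prop
  have hpt (w : ℝ × (Fin 3 → ℤ)) :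
      ENNReal.ofReal ((pweight w ^ 4)⁻¹ * (pweight (v - w) ^ 4)⁻¹) ≤ g w + g (v - w) := by
    have hw := one_le_pweight w
    have hvw := one_le_pweight (v - w)
    have : pweight v ≤ pweight w + pweight (v - w) := by
      simpa using pweight_add_le w (v - w)
    rw [← ENNReal.ofReal_add (by positivity) (by positivity)]
    exact ENNReal.ofReal_le_ofReal (inv_pow_mul_inv_pow_le_add (by positivity) (by positivity)
      (by rw [hMv]; linarith) 4)
  calc _ ≤ ∫⁻ w, g w + g (v - w) ∂Emeasure := lintegral_mono hpt
    _ = 2 * ∫⁻ w, g w ∂Emeasure := by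
        rw [lintegral_add_left hg, two_mul,
          (measurePreserving_sub_left_Emeasure v).lintegral_comp_emb
            (MeasurableEquiv.subLeft v).measurableEmbedding g]
    _ ≤ 2 * ENNReal.ofReal (2 ^ 14 / M ^ 3) := by
        gcongr; exact lintegral_inv_pweight_pow_mul_inv_max_pow_le hM
    _ = ENNReal.ofReal (2 ^ 18 / pweight v ^ 3) := by
        rw [← ENNReal.ofReal_ofNat 2, ← ENNReal.ofReal_mul zero_le_two, hMv]
        congr 1
        field_simp

/-- the hyperplane integral
`∫_{μ₁+μ₂=μ} |Q(μ₁)|²|Q(μ₂)|² = ∫_ℝ dσ₁ Σ_{k₁} |Q(σ₁,k₁)|²|Q(μ-μ₁)|² ≲ |μ|_*^{-3}`. -/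
theorem statement17 (μ : ℝ) (hμ : 0 < μ) :
    ∃ C : ℝ, 0 < C ∧ ∀ v : ℝ × (Fin 3 → ℤ),
      ∫⁻ w, (‖Qker μ w‖₊ : ℝ≥0∞) ^ (2 : ℕ) * (‖Qker μ (v - w)‖₊ : ℝ≥0∞) ^ (2 : ℕ)
          ∂Emeasure ≤
        ENNReal.ofReal (C * (pweight v) ^ (-3 : ℝ)) := by
  set K := 6 * (1 + μ⁻¹)
  refine ⟨K ^ 4 * 2 ^ 18, by positivity, fun v ↦ ?_⟩
  have hv : 0 < pweight v := by linarith [one_le_pweight v]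
  calc _ ≤ ∫⁻ w, ENNReal.ofReal (K ^ 4) *
        ENNReal.ofReal ((pweight w ^ 4)⁻¹ * (pweight (v - w) ^ 4)⁻¹) ∂Emeasure := by
        refine lintegral_mono fun w ↦
          (mul_le_mul' (enorm_Qker_sq_le w hμ) (enorm_Qker_sq_le (v - w) hμ)).trans_eq ?_
        rw [← ENNReal.ofReal_mul (by positivity), ← ENNReal.ofReal_mul (by positivity)]
        congr 1
        ring
    _ = ENNReal.ofReal (K ^ 4) *
        ∫⁻ w, ENNReal.ofReal ((pweight w ^ 4)⁻¹ * (pweight (v - w) ^ 4)⁻¹) ∂Emeasure :=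
        lintegral_const_mul' _ _ ENNReal.ofReal_ne_top
    _ ≤ ENNReal.ofReal (K ^ 4) * ENNReal.ofReal (2 ^ 18 / pweight v ^ 3) := by
        gcongr; exact lintegral_inv_pweight_pow_mul_le v
    _ = ENNReal.ofReal (K ^ 4 * 2 ^ 18 * pweight v ^ (-3 : ℝ)) := by
        rw [← ENNReal.ofReal_mul (by positivity), Real.rpow_neg hv.le, Real.rpow_ofNat]
        congr 1
        ring
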